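/- arXiv:2605.17887 — 4 statements merged into one kernel-verified Lean document; each statement's English description precedes it below -/
import Mathlib

section
/- Let d and m be natural numbers with m ≥ 1, let v₁, …, vₘ be vectors in ℝᵈ, and let p₁, …, pₘ be nonnegative reals with ∑_{j=1}^m p_j = 1. Suppose there exist constants c₀, c₁ with 0 ≤ c₀ < c₁, an index o ∈ {1,…,m}, and a unit vector u ∈ ℝᵈ such that ‖v_o‖ ≤ c₀ and ⟨v_j, u⟩ ≥ c₁ for all j ≠ o. If δ is a real number with δ < c₁ and ‖∑_{j=1}^m p_j v_j‖ ≤ δ, then p_o ≥ (c₁ − δ)/(c₀ + c₁). -/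
/-!
Project the attention output `A` onto `u`: on one hand `⟪A, u⟫ ≤ ‖A‖ ≤ δ`; on the other,
`⟪v o, u⟫ ≥ -‖v o‖ ≥ -c₀` and every other token contributes at least `c₁`, so
`⟪A, u⟫ ≥ -c₀ p_o + c₁ (1 - p_o)`. Comparing the two bounds gives `c₁ - δ ≤ p_o (c₀ + c₁)`.
-/

open Finset

theorem mul_add_one_sub_mul_le_sum_mul {ι : Type*} [Fintype ι] [DecidableEq ι]
    {p x : ι → ℝ} (hp : ∀ j, 0 ≤ p j) (hpsum : ∑ j, p j = 1)
    {o : ι} {a b : ℝ} (ho : a ≤ x o) (hne : ∀ j, j ≠ o → b ≤ x j) :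
    p o * a + (1 - p o) * b ≤ ∑ j, p j * x j := by
  have hsplit : ∑ j, p j * x j = p o * x o + ∑ j ∈ univ.erase o, p j * x j :=
    (add_sum_erase _ _ (mem_univ o)).symm
  have hrest : ∑ j ∈ univ.erase o, p j = 1 - p o := by
    rw [← hpsum, ← add_sum_erase _ _ (mem_univ o), add_sub_cancel_left]
  have hbulk : (1 - p o) * b ≤ ∑ j ∈ univ.erase o, p j * x j := by
    rw [← hrest, sum_mul]
    exact sum_le_sum fun j hj => mul_le_mul_of_nonneg_left (hne j (ne_of_mem_erase hj)) (hp j)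
  rw [hsplit]
  exact add_le_add (mul_le_mul_of_nonneg_left ho (hp o)) hbulk

theorem noop_outlier_lower_bound_general
    (d m : ℕ)
    (v : Fin m → EuclideanSpace ℝ (Fin d))
    (p : Fin m → ℝ) (hp : ∀ j, 0 ≤ p j) (hpsum : ∑ j, p j = 1)
    (c₀ c₁ : ℝ) (hc₀c₁ : c₀ < c₁)
    (o : Fin m) (u : EuclideanSpace ℝ (Fin d)) (hu : ‖u‖ = 1)
    (hvo : ‖v o‖ ≤ c₀)
    (halign : ∀ j, j ≠ o → c₁ ≤ (inner ℝ (v j) u : ℝ))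
    (δ : ℝ)
    (hA : ‖∑ j, p j • v j‖ ≤ δ) :
    (c₁ - δ) / (c₀ + c₁) ≤ p o := by
  have hc : 0 < c₀ + c₁ := by linarith [norm_nonneg (v o)]
  have hvo' : -c₀ ≤ inner ℝ (v o) u := by
    have := (abs_le.mp (abs_real_inner_le_norm (v o) u)).1
    rw [hu, mul_one] at this
    linarith
  have hlow := mul_add_one_sub_mul_le_sum_mul hp hpsum hvo' halign
  have hup : ∑ j, p j * inner ℝ (v j) u ≤ δ :=
    calc ∑ j, p j * inner ℝ (v j) u = inner ℝ (∑ j, p j • v j) u := by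
          simp only [sum_inner, real_inner_smul_left]
      _ ≤ ‖∑ j, p j • v j‖ * ‖u‖ := real_inner_le_norm _ _
      _ ≤ δ := by rwa [hu, mul_one]
  rw [div_le_iff₀ hc]
  linarith

/-- Lemma 1 (No-op outliers are structurally induced). -/
theorem noop_outlier_lower_bound
    (d m : ℕ) (hm : 1 ≤ m)
    (v : Fin m → EuclideanSpace ℝ (Fin d))
    (p : Fin m → ℝ) (hp : ∀ j, 0 ≤ p j) (hpsum : ∑ j, p j = 1)
    (c₀ c₁ : ℝ) (hc₀ : 0 ≤ c₀) (hc₀c₁ : c₀ < c₁)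
    (o : Fin m) (u : EuclideanSpace ℝ (Fin d)) (hu : ‖u‖ = 1)
    (hvo : ‖v o‖ ≤ c₀)
    (halign : ∀ j, j ≠ o → c₁ ≤ (inner ℝ (v j) u : ℝ))
    (δ : ℝ) (hδ : δ < c₁)
    (hA : ‖∑ j, p j • v j‖ ≤ δ) :
    (c₁ - δ) / (c₀ + c₁) ≤ p o :=
  noop_outlier_lower_bound_general d m v p hp hpsum c₀ c₁ hc₀c₁ o u hu hvo halign δ hA
end

section
/- Let d and ℓ be natural numbers with ℓ ≥ 1, let u₀, …, u_{ℓ−1} be vectors in ℝᵈ, and let α₀, …, α_{ℓ−1} be nonnegative reals with ∑_{i=0}^{ℓ−1} α_i = 1. Suppose there exist an index i* ∈ {0,…,ℓ−1}, constants b₀ ≥ 0 and b₁ > 0, and a unit vector w ∈ ℝᵈ such that ‖u_{i*}‖ ≤ b₀ and ⟨u_i, w⟩ ≥ b₁ for all i ≠ i*. If δ is a real number and ‖∑_{i=0}^{ℓ−1} α_i u_i‖ ≤ δ, then α_{i*} ≥ (b₁ − δ)/(b₀ + b₁). -/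
/-!
Project the composed update onto the alignment direction `w`. The projection is at most
`‖∑ αᵢ uᵢ‖ ≤ δ`, while every branch other than `i*` contributes at least `b₁` per unit of weight
and `i*` loses at most `b₀`. Hence `δ ≥ (1 - α_{i*}) b₁ - α_{i*} b₀`, which rearranges to the claim.
-/

open Finset RealInnerProductSpace

section WeightedMean

variable {ι : Type*} [Fintype ι] {α f : ι → ℝ}

theorem le_sum_mul_of_le_of_ne (hα : ∀ i, 0 ≤ α i) (hαsum : ∑ i, α i = 1) (j : ι) {b : ℝ}
    (hf : ∀ i, i ≠ j → b ≤ f i) : α j * f j + (1 - α j) * b ≤ ∑ i, α i * f i := by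
  classical
  have hrest : ∑ i ∈ univ.erase j, α i = 1 - α j := by
    rw [← hαsum, ← add_sum_erase univ α (mem_univ j), add_sub_cancel_left]
  have hbound : ∑ i ∈ univ.erase j, α i * b ≤ ∑ i ∈ univ.erase j, α i * f i :=
    sum_le_sum fun i hi => mul_le_mul_of_nonneg_left (hf i (ne_of_mem_erase hi)) (hα i)
  rw [← sum_mul, hrest] at hbound
  rw [← add_sum_erase univ _ (mem_univ j)]
  linarith

theorem div_le_weight_of_sum_mul_le (hα : ∀ i, 0 ≤ α i) (hαsum : ∑ i, α i = 1) (j : ι)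
    {b₀ b₁ δ : ℝ} (hb : 0 < b₀ + b₁) (hj : -b₀ ≤ f j) (hf : ∀ i, i ≠ j → b₁ ≤ f i)
    (hδ : ∑ i, α i * f i ≤ δ) : (b₁ - δ) / (b₀ + b₁) ≤ α j := by
  have hlow := le_sum_mul_of_le_of_ne hα hαsum j hf
  have hj' : α j * -b₀ ≤ α j * f j := mul_le_mul_of_nonneg_left hj (hα j)
  rw [div_le_iff₀ hb]
  linarith

end WeightedMean

theorem depth_weight_concentration_general
    (d ℓ : ℕ)
    (u : Fin ℓ → EuclideanSpace ℝ (Fin d))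
    (α : Fin ℓ → ℝ) (hα : ∀ i, 0 ≤ α i) (hαsum : ∑ i, α i = 1)
    (istar : Fin ℓ)
    (b₀ b₁ : ℝ) (hb₁ : 0 < b₁)
    (w : EuclideanSpace ℝ (Fin d)) (hw : ‖w‖ = 1)
    (hustar : ‖u istar‖ ≤ b₀)
    (halign : ∀ i, i ≠ istar → b₁ ≤ (inner ℝ (u i) w : ℝ))
    (δ : ℝ) (hA : ‖∑ i, α i • u i‖ ≤ δ) :
    (b₁ - δ) / (b₀ + b₁) ≤ α istar := by
  have hproj : ∑ i, α i * ⟪u i, w⟫ ≤ δ :=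
    calc ∑ i, α i * ⟪u i, w⟫ = ⟪∑ i, α i • u i, w⟫ := by
          simp only [sum_inner, real_inner_smul_left]
      _ ≤ ‖∑ i, α i • u i‖ * ‖w‖ := real_inner_le_norm _ _
      _ ≤ δ := by rwa [hw, mul_one]
  have hstar : -b₀ ≤ ⟪u istar, w⟫ :=
    calc -b₀ ≤ -(‖u istar‖ * ‖w‖) := by rw [hw, mul_one]; exact neg_le_neg hustar
      _ ≤ ⟪u istar, w⟫ := neg_le_of_abs_le (abs_real_inner_le_norm _ _)
  have hb : 0 < b₀ + b₁ := by linarith [norm_nonneg (u istar)]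
  exact div_le_weight_of_sum_mul_le hα hαsum istar hb hstar halign hproj

/-- Quantitative core of Theorem 2 (conditional depth collapse). -/
theorem depth_weight_concentration
    (d ℓ : ℕ) (hℓ : 1 ≤ ℓ)
    (u : Fin ℓ → EuclideanSpace ℝ (Fin d))
    (α : Fin ℓ → ℝ) (hα : ∀ i, 0 ≤ α i) (hαsum : ∑ i, α i = 1)
    (istar : Fin ℓ)
    (b₀ b₁ : ℝ) (hb₀ : 0 ≤ b₀) (hb₁ : 0 < b₁)
    (w : EuclideanSpace ℝ (Fin d)) (hw : ‖w‖ = 1)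
    (hustar : ‖u istar‖ ≤ b₀)
    (halign : ∀ i, i ≠ istar → b₁ ≤ (inner ℝ (u i) w : ℝ))
    (δ : ℝ) (hA : ‖∑ i, α i • u i‖ ≤ δ) :
    (b₁ - δ) / (b₀ + b₁) ≤ α istar :=
  depth_weight_concentration_general d ℓ u α hα hαsum istar b₀ b₁ hb₁ w hw hustar halign δ hA
end

section
/- Let d and ℓ be natural numbers with ℓ ≥ 1, let u₀, …, u_{ℓ−1} be vectors in ℝᵈ, and let α₀, …, α_{ℓ−1} be nonnegative reals with ∑_{i=0}^{ℓ−1} α_i = 1. Suppose there exist an index i* ∈ {0,…,ℓ−1}, constants b₀ ≥ 0 and b₁ > 0, and a unit vector w ∈ ℝᵈ such that ‖u_{i*}‖ ≤ b₀ and ⟨u_i, w⟩ ≥ b₁ for all i ≠ i*. If δ is a real number and ‖∑_{i=0}^{ℓ−1} α_i u_i‖ ≤ δ, then ∑_{i ≠ i*} α_i ≤ (b₀ + δ)/(b₀ + b₁). -/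
/-!
Pair the routed update with the direction `w`. By Cauchy–Schwarz its component along `w` is at
most `δ`; on the other hand it is a convex combination of components that are at least `-b₀` on
the minimal branch and at least `b₁` off it, so it is at least `-b₀ + (b₀ + b₁) S`, where `S` is
the off-branch mass.
-/

open Finset
open scoped RealInnerProductSpace

section Scalar

variable {ι : Type*} [Fintype ι] [DecidableEq ι] {α c : ι → ℝ} {i₀ : ι} {b₀ b₁ : ℝ}

theorem neg_add_mul_sum_erase_le_sum_mul (hα : ∀ i, 0 ≤ α i) (hαsum : ∑ i, α i = 1)
    (hc₀ : -b₀ ≤ c i₀) (hc : ∀ i, i ≠ i₀ → b₁ ≤ c i) :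
    -b₀ + (b₀ + b₁) * ∑ i ∈ univ.erase i₀, α i ≤ ∑ i, α i * c i := by
  have hα₀ : α i₀ = 1 - ∑ i ∈ univ.erase i₀, α i := by
    rw [← hαsum, ← add_sum_erase univ α (mem_univ i₀), add_sub_cancel_right]
  have hterm : -b₀ + b₀ * ∑ i ∈ univ.erase i₀, α i ≤ α i₀ * c i₀ :=
    calc -b₀ + b₀ * ∑ i ∈ univ.erase i₀, α i = α i₀ * -b₀ := by rw [hα₀]; ring
      _ ≤ α i₀ * c i₀ := mul_le_mul_of_nonneg_left hc₀ (hα i₀)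
  have hrest : ∑ i ∈ univ.erase i₀, α i * b₁ ≤ ∑ i ∈ univ.erase i₀, α i * c i :=
    sum_le_sum fun i hi => mul_le_mul_of_nonneg_left (hc i (ne_of_mem_erase hi)) (hα i)
  rw [← add_sum_erase univ _ (mem_univ i₀)]
  rw [← sum_mul] at hrest
  linarith

theorem sum_erase_le_div_of_sum_mul_le (hα : ∀ i, 0 ≤ α i) (hαsum : ∑ i, α i = 1)
    (hc₀ : -b₀ ≤ c i₀) (hc : ∀ i, i ≠ i₀ → b₁ ≤ c i) (hb : 0 < b₀ + b₁) {δ : ℝ}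
    (hδ : ∑ i, α i * c i ≤ δ) :
    ∑ i ∈ univ.erase i₀, α i ≤ (b₀ + δ) / (b₀ + b₁) := by
  rw [le_div_iff₀ hb]
  linarith [neg_add_mul_sum_erase_le_sum_mul hα hαsum hc₀ hc]

end Scalar

section InnerProduct

variable {E : Type*} [NormedAddCommGroup E] [InnerProductSpace ℝ E] {x w : E}

theorem neg_le_real_inner_of_norm_le {b : ℝ} (hw : ‖w‖ ≤ 1) (hx : ‖x‖ ≤ b) :
    -b ≤ ⟪x, w⟫ := by
  have hxw : ‖x‖ * ‖w‖ ≤ b := (mul_le_of_le_one_right (norm_nonneg x) hw).trans hx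
  linarith [neg_abs_le ⟪x, w⟫, abs_real_inner_le_norm x w]

theorem real_inner_le_of_norm_le {δ : ℝ} (hw : ‖w‖ ≤ 1) (hx : ‖x‖ ≤ δ) : ⟪x, w⟫ ≤ δ :=
  (real_inner_le_norm x w).trans ((mul_le_of_le_one_right (norm_nonneg x) hw).trans hx)

end InnerProduct

theorem off_branch_mass_upper_bound_general
    (d ℓ : ℕ)
    (u : Fin ℓ → EuclideanSpace ℝ (Fin d))
    (α : Fin ℓ → ℝ) (hα : ∀ i, 0 ≤ α i) (hαsum : ∑ i, α i = 1)
    (istar : Fin ℓ)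
    (b₀ b₁ : ℝ) (hb₁ : 0 < b₁)
    (w : EuclideanSpace ℝ (Fin d)) (hw : ‖w‖ = 1)
    (hustar : ‖u istar‖ ≤ b₀)
    (halign : ∀ i, i ≠ istar → b₁ ≤ (inner ℝ (u i) w : ℝ))
    (δ : ℝ) (hA : ‖∑ i, α i • u i‖ ≤ δ) :
    ∑ i ∈ Finset.univ.erase istar, α i ≤ (b₀ + δ) / (b₀ + b₁) := by
  have hb : 0 < b₀ + b₁ := by linarith [(norm_nonneg _).trans hustar]
  have hcomponent : ∑ i, α i * ⟪u i, w⟫ = ⟪∑ i, α i • u i, w⟫ := by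
    simp only [sum_inner, real_inner_smul_left]
  refine sum_erase_le_div_of_sum_mul_le (c := fun i => ⟪u i, w⟫) hα hαsum
    (neg_le_real_inner_of_norm_le hw.le hustar) halign hb ?_
  exact hcomponent ▸ real_inner_le_of_norm_le hw.le hA

/-- Complementary form of the depth-weight concentration bound in Theorem 2. -/
theorem off_branch_mass_upper_bound
    (d ℓ : ℕ) (hℓ : 1 ≤ ℓ)
    (u : Fin ℓ → EuclideanSpace ℝ (Fin d))
    (α : Fin ℓ → ℝ) (hα : ∀ i, 0 ≤ α i) (hαsum : ∑ i, α i = 1)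
    (istar : Fin ℓ)
    (b₀ b₁ : ℝ) (hb₀ : 0 ≤ b₀) (hb₁ : 0 < b₁)
    (w : EuclideanSpace ℝ (Fin d)) (hw : ‖w‖ = 1)
    (hustar : ‖u istar‖ ≤ b₀)
    (halign : ∀ i, i ≠ istar → b₁ ≤ (inner ℝ (u i) w : ℝ))
    (δ : ℝ) (hA : ‖∑ i, α i • u i‖ ≤ δ) :
    ∑ i ∈ Finset.univ.erase istar, α i ≤ (b₀ + δ) / (b₀ + b₁) :=
  off_branch_mass_upper_bound_general d ℓ u α hα hαsum istar b₀ b₁ hb₁ w hw hustar halign δ hA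
end

section
/- Let d be a natural number and ℓ ≥ 1, and for each n ∈ ℕ let u₀ⁿ, …, u_{ℓ−1}ⁿ be vectors in ℝᵈ and α₀ⁿ, …, α_{ℓ−1}ⁿ nonnegative reals with ∑_i α_iⁿ = 1. Fix b₁ > 0 and an index i*, and suppose for each n there is a unit vector wₙ ∈ ℝᵈ with ⟨u_iⁿ, wₙ⟩ ≥ b₁ for all i ≠ i*, that ‖u_{i*}ⁿ‖ ≤ b₀ⁿ with b₀ⁿ → 0, and that ‖∑_i α_iⁿ u_iⁿ‖ ≤ δₙ with δₙ → 0. Then α_{i*}ⁿ → 1 and ∑_{i≠i*} α_iⁿ → 0 as n → ∞. -/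
/-!
Pair the update `∑ i, α i • u i` with the separating unit direction `w`. The pairing is at most
`‖∑ i, α i • u i‖ ≤ δ`; the `i*` term contributes at least `-‖u i*‖ ≥ -b₀` and every other term
at least `b₁ α i`. Hence `b₁ ∑_{i ≠ i*} α i ≤ δ + b₀ → 0`, and `α i* = 1 - ∑_{i ≠ i*} α i → 1`.
-/

open Filter Finset RealInnerProductSpace

theorem mul_sum_erase_le_norm_sum_add_norm {ι E : Type*} [Fintype ι] [DecidableEq ι]
    [NormedAddCommGroup E] [InnerProductSpace ℝ E] {α : ι → ℝ} {u : ι → E} {w : E} {b : ℝ}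
    {i₀ : ι} (hα : ∀ i, 0 ≤ α i) (hα₀ : α i₀ ≤ 1) (hw : ‖w‖ ≤ 1)
    (halign : ∀ i, i ≠ i₀ → b ≤ ⟪u i, w⟫) :
    b * ∑ i ∈ univ.erase i₀, α i ≤ ‖∑ i, α i • u i‖ + ‖u i₀‖ := by
  have abs_inner_le : ∀ x : E, |⟪x, w⟫| ≤ ‖x‖ := fun x =>
    (abs_real_inner_le_norm x w).trans (mul_le_of_le_one_right (norm_nonneg x) hw)
  have hexpand : ⟪∑ i, α i • u i, w⟫ =
      α i₀ * ⟪u i₀, w⟫ + ∑ i ∈ univ.erase i₀, α i * ⟪u i, w⟫ := by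
    simp only [sum_inner, real_inner_smul_left]
    exact (add_sum_erase _ _ (mem_univ i₀)).symm
  have hstar : -‖u i₀‖ ≤ α i₀ * ⟪u i₀, w⟫ :=
    calc -‖u i₀‖ ≤ α i₀ * -‖u i₀‖ := by
          rw [mul_neg]; exact neg_le_neg (mul_le_of_le_one_left (norm_nonneg _) hα₀)
      _ ≤ α i₀ * ⟪u i₀, w⟫ :=
          mul_le_mul_of_nonneg_left (neg_le_of_abs_le (abs_inner_le _)) (hα i₀)
  have hrest : b * ∑ i ∈ univ.erase i₀, α i ≤ ∑ i ∈ univ.erase i₀, α i * ⟪u i, w⟫ := by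
    rw [mul_sum]
    refine sum_le_sum fun i hi => ?_
    rw [mul_comm]
    exact mul_le_mul_of_nonneg_left (halign i (ne_of_mem_erase hi)) (hα i)
  have hpair := (le_abs_self _).trans (abs_inner_le (∑ i, α i • u i))
  linarith

theorem tendsto_zero_of_nonneg_of_mul_le {β : Type*} {l : Filter β} {S ε : β → ℝ} {b : ℝ}
    (hb : 0 < b) (hS : ∀ n, 0 ≤ S n) (hle : ∀ n, b * S n ≤ ε n)
    (hε : Tendsto ε l (nhds 0)) : Tendsto S l (nhds 0) :=
  tendsto_of_tendsto_of_tendsto_of_le_of_le tendsto_const_nhds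
    (by simpa using hε.div_const b) hS fun n => (le_div_iff₀' hb).2 (hle n)

theorem depth_collapse_limit_general
    (d ℓ : ℕ)
    (u : ℕ → Fin ℓ → EuclideanSpace ℝ (Fin d))
    (α : ℕ → Fin ℓ → ℝ)
    (hα : ∀ n i, 0 ≤ α n i) (hαsum : ∀ n, ∑ i, α n i = 1)
    (b₁ : ℝ) (hb₁ : 0 < b₁) (istar : Fin ℓ)
    (w : ℕ → EuclideanSpace ℝ (Fin d)) (hw : ∀ n, ‖w n‖ = 1)
    (halign : ∀ n, ∀ i, i ≠ istar → b₁ ≤ (inner ℝ (u n i) (w n) : ℝ))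
    (b₀ : ℕ → ℝ) (hustar : ∀ n, ‖u n istar‖ ≤ b₀ n)
    (hb₀ : Tendsto b₀ atTop (nhds 0))
    (δ : ℕ → ℝ) (hA : ∀ n, ‖∑ i, α n i • u n i‖ ≤ δ n)
    (hδ : Tendsto δ atTop (nhds 0)) :
    Tendsto (fun n => α n istar) atTop (nhds 1) ∧
      Tendsto (fun n => ∑ i ∈ Finset.univ.erase istar, α n i) atTop (nhds 0) := by
  set S : ℕ → ℝ := fun n => ∑ i ∈ univ.erase istar, α n i
  have hsplit : ∀ n, α n istar + S n = 1 := fun n =>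
    (add_sum_erase _ _ (mem_univ istar)).trans (hαsum n)
  have hS0 : ∀ n, 0 ≤ S n := fun n => sum_nonneg fun i _ => hα n i
  have hbound : ∀ n, b₁ * S n ≤ δ n + b₀ n := fun n =>
    (mul_sum_erase_le_norm_sum_add_norm (hα n) (by linarith [hS0 n, hsplit n]) (hw n).le
      (halign n)).trans (add_le_add (hA n) (hustar n))
  have hS : Tendsto S atTop (nhds 0) :=
    tendsto_zero_of_nonneg_of_mul_le hb₁ hS0 hbound (by simpa using hδ.add hb₀)
  refine ⟨?_, hS⟩
  have hαstar : (fun n => α n istar) = fun n => 1 - S n := funext fun n => by linarith [hsplit n]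
  rw [hαstar]
  simpa using tendsto_const_nhds.sub hS

/-- Limiting (high-separation) form of Theorem 2 (conditional depth collapse
toward vanilla-like residual). -/
theorem depth_collapse_limit
    (d ℓ : ℕ) (hℓ : 1 ≤ ℓ)
    (u : ℕ → Fin ℓ → EuclideanSpace ℝ (Fin d))
    (α : ℕ → Fin ℓ → ℝ)
    (hα : ∀ n i, 0 ≤ α n i) (hαsum : ∀ n, ∑ i, α n i = 1)
    (b₁ : ℝ) (hb₁ : 0 < b₁) (istar : Fin ℓ)
    (w : ℕ → EuclideanSpace ℝ (Fin d)) (hw : ∀ n, ‖w n‖ = 1)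
    (halign : ∀ n, ∀ i, i ≠ istar → b₁ ≤ (inner ℝ (u n i) (w n) : ℝ))
    (b₀ : ℕ → ℝ) (hustar : ∀ n, ‖u n istar‖ ≤ b₀ n)
    (hb₀ : Tendsto b₀ atTop (nhds 0))
    (δ : ℕ → ℝ) (hA : ∀ n, ‖∑ i, α n i • u n i‖ ≤ δ n)
    (hδ : Tendsto δ atTop (nhds 0)) :
    Tendsto (fun n => α n istar) atTop (nhds 1) ∧
      Tendsto (fun n => ∑ i ∈ Finset.univ.erase istar, α n i) atTop (nhds 0) :=
  depth_collapse_limit_general d ℓ u α hα hαsum b₁ hb₁ istar w hw halign b₀ hustar hb₀ δ hA hδ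
end
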